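/- Let Γ be a Hermitian matrix on ℂ^a ⊗ ℂ^d with 0 ≤ Γ ≤ I, let ψ ∈ ℂ^a be a unit vector, and suppose there exists a density matrix σ on ℂ^d with tr( Γ (ψψᴴ ⊗ σ) ) ≥ η for some η > 0. Then for every density matrix φ on ℂ^a, tr( Γ (φ ⊗ I_d/d) ) ≥ ( η − ‖ φ − ψψᴴ ‖_tr ) / d. In particular, every density matrix φ with tr( Γ (φ ⊗ I_d/d) ) ≤ η/(2d) satisfies ‖ φ − ψψᴴ ‖_tr ≥ η/2. -/

import Mathlib

open Matrix
open scoped ComplexOrder Kronecker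

/-- The trace distance `‖ρ − σ‖_tr = (1/2)·tr|ρ − σ|`, where `|M| = √(Mᴴ M)`. -/
noncomputable def traceDist {d : ℕ} (ρ σ : Matrix (Fin d) (Fin d) ℂ) : ℝ :=
  (1 / 2) * ((((Matrix.posSemidef_conjTranspose_mul_self (ρ - σ)).1.eigenvectorUnitary : Matrix (Fin d) (Fin d) ℂ) *
    Matrix.diagonal (((↑) : ℝ → ℂ) ∘ Real.sqrt ∘ (Matrix.posSemidef_conjTranspose_mul_self (ρ - σ)).1.eigenvalues) *
    (star (Matrix.posSemidef_conjTranspose_mul_self (ρ - σ)).1.eigenvectorUnitary : Matrix (Fin d) (Fin d) ℂ)).trace).re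

/-!
Write `φ = ψψᴴ + Δ` and split the Hermitian matrix `Δ = Δ⁺ - Δ⁻` into positive and negative
parts, so that `tr Δ⁻ = ‖φ - ψψᴴ‖_tr` because `tr Δ = 0`. Since `I - σ ≥ 0`,
`tr(Γ(φ ⊗ I)) ≥ tr(Γ(φ ⊗ σ)) = tr(Γ(ψψᴴ ⊗ σ)) + tr(Γ(Δ⁺ ⊗ σ)) - tr(Γ(Δ⁻ ⊗ σ))`, and
`0 ≤ Γ ≤ I` bounds the last two terms below by `0` and `-tr Δ⁻` respectively.
-/

open scoped MatrixOrder

namespace Matrix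

variable {n 𝕜 : Type*} [Fintype n] [RCLike 𝕜]

theorem kronecker_nonneg {m : Type*} [Fintype m] {A : Matrix m m 𝕜} {B : Matrix n n 𝕜}
    (hA : 0 ≤ A) (hB : 0 ≤ B) : 0 ≤ A ⊗ₖ B :=
  (hA.posSemidef.kronecker hB.posSemidef).nonneg

variable [DecidableEq n]

theorem PosSemidef.trace_mul_nonneg {A B : Matrix n n 𝕜} (hA : A.PosSemidef) (hB : B.PosSemidef) :
    0 ≤ (A * B).trace := by
  have hsqrt : (CFC.sqrt A)ᴴ = CFC.sqrt A := (CFC.sqrt_nonneg A).isSelfAdjoint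
  calc 0 ≤ (CFC.sqrt A * B * (CFC.sqrt A)ᴴ).trace := (hB.mul_mul_conjTranspose_same _).trace_nonneg
    _ = (A * B).trace := by rw [hsqrt, trace_mul_cycle, CFC.sqrt_mul_sqrt_self A hA.nonneg]

theorem re_trace_mul_nonneg {A B : Matrix n n 𝕜} (hA : 0 ≤ A) (hB : 0 ≤ B) :
    0 ≤ RCLike.re (A * B).trace :=
  (RCLike.nonneg_iff.mp (hA.posSemidef.trace_mul_nonneg hB.posSemidef)).1

theorem re_trace_mul_le_of_le_one {M P : Matrix n n 𝕜} (hM : M ≤ 1) (hP : 0 ≤ P) :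
    RCLike.re (M * P).trace ≤ RCLike.re P.trace := by
  have := re_trace_mul_nonneg (sub_nonneg.mpr hM) hP
  rwa [sub_mul, one_mul, trace_sub, map_sub, sub_nonneg] at this

theorem PosSemidef.le_algebraMap_re_trace {A : Matrix n n 𝕜} (hA : A.PosSemidef) :
    A ≤ algebraMap ℝ _ (RCLike.re A.trace) := by
  refine le_algebraMap_of_spectrum_le fun x hx => ?_
  obtain ⟨i, rfl⟩ := hA.1.spectrum_real_eq_range_eigenvalues ▸ hx
  rw [hA.1.trace_eq_sum_eigenvalues, map_sum]
  simp only [RCLike.ofReal_re]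
  exact Finset.single_le_sum (fun j _ => hA.eigenvalues_nonneg j) (Finset.mem_univ i)

theorem PosSemidef.le_one_of_trace_eq_one {A : Matrix n n 𝕜} (hA : A.PosSemidef)
    (h : A.trace = 1) : A ≤ 1 := by
  simpa [h] using hA.le_algebraMap_re_trace

end Matrix

theorem traceDist_eq_re_trace_abs {d : ℕ} (ρ σ : Matrix (Fin d) (Fin d) ℂ) :
    traceDist ρ σ = (1 / 2) * (CFC.abs (ρ - σ)).trace.re := by
  have h0 : 0 ≤ (ρ - σ)ᴴ * (ρ - σ) := (posSemidef_conjTranspose_mul_self _).nonneg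
  rw [CFC.abs, star_eq_conjTranspose, CFC.sqrt_eq_real_sqrt _ h0,
    cfcₙ_eq_cfc Real.continuous_sqrt.continuousOn Real.sqrt_zero,
    (posSemidef_conjTranspose_mul_self _).1.cfc_eq, IsHermitian.cfc, Unitary.conjStarAlgAut_apply]
  rfl

theorem re_trace_negPart_sub_eq_traceDist {d : ℕ} {φ ρ : Matrix (Fin d) (Fin d) ℂ}
    (hφ : φ.IsHermitian) (hρ : ρ.IsHermitian) (htr : φ.trace = ρ.trace) :
    ((φ - ρ)⁻).trace.re = traceDist φ ρ := by
  have hΔ : IsSelfAdjoint (φ - ρ) := hφ.sub hρ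
  have h := congrArg (fun X => X.trace.re) (CFC.abs_sub_self (φ - ρ))
  simp only [trace_sub, htr, sub_self, sub_zero, trace_smul] at h
  rw [traceDist_eq_re_trace_abs, h]
  simp

theorem sub_traceDist_le_re_trace_mul_kronecker_one {a : ℕ} {n : Type*} [Fintype n]
    [DecidableEq n] {Γ : Matrix (Fin a × n) (Fin a × n) ℂ} (hΓ₀ : 0 ≤ Γ) (hΓ₁ : Γ ≤ 1)
    {φ ρ : Matrix (Fin a) (Fin a) ℂ} (hφ : 0 ≤ φ) (hρ : ρ.IsHermitian) (htr : φ.trace = ρ.trace)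
    {σ : Matrix n n ℂ} (hσ : 0 ≤ σ) (hσtr : σ.trace = 1) :
    (Γ * (ρ ⊗ₖ σ)).trace.re - traceDist φ ρ ≤ (Γ * (φ ⊗ₖ 1)).trace.re := by
  set Δ := φ - ρ
  have hφ' : φ.IsHermitian := hφ.posSemidef.1
  have hΔ : IsSelfAdjoint Δ := hφ'.sub hρ
  have hsplit : Δ⁺ + ρ = φ + Δ⁻ := sub_eq_sub_iff_add_eq_add.mp (CFC.posPart_sub_negPart Δ)
  have hone : φ ⊗ₖ 1 = φ ⊗ₖ σ + φ ⊗ₖ (1 - σ) := by rw [← kronecker_add, add_sub_cancel]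
  have hpos : 0 ≤ (Γ * (Δ⁺ ⊗ₖ σ)).trace.re :=
    re_trace_mul_nonneg hΓ₀ (kronecker_nonneg (CFC.posPart_nonneg Δ) hσ)
  have hneg : (Γ * (Δ⁻ ⊗ₖ σ)).trace.re ≤ traceDist φ ρ := by
    have h := re_trace_mul_le_of_le_one hΓ₁ (kronecker_nonneg (CFC.negPart_nonneg Δ) hσ)
    rw [trace_kronecker, hσtr, mul_one] at h
    rwa [← re_trace_negPart_sub_eq_traceDist hφ' hρ htr]
  have hrest : 0 ≤ (Γ * (φ ⊗ₖ (1 - σ))).trace.re :=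
    re_trace_mul_nonneg hΓ₀ (kronecker_nonneg hφ (sub_nonneg.mpr
      (hσ.posSemidef.le_one_of_trace_eq_one hσtr)))
  have key := congrArg (fun X => (Γ * X).trace.re) (congrArg (· ⊗ₖ σ) hsplit)
  simp only [add_kronecker, mul_add, trace_add, Complex.add_re] at key
  rw [hone, mul_add, trace_add, Complex.add_re]
  linarith

theorem stmt_13_general {a d : ℕ} (hd : 0 < d)
    (Γ : Matrix (Fin a × Fin d) (Fin a × Fin d) ℂ)
    (hΓ : Γ.PosSemidef) (hΓI : ((1 : Matrix (Fin a × Fin d) (Fin a × Fin d) ℂ) - Γ).PosSemidef)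
    (ψ : Fin a → ℂ) (hψ : star ψ ⬝ᵥ ψ = 1)
    (η : ℝ)
    (σ : Matrix (Fin d) (Fin d) ℂ) (hσ : σ.PosSemidef) (hσtr : σ.trace = 1)
    (hacc : η ≤ ((Γ * (Matrix.vecMulVec ψ (star ψ) ⊗ₖ σ)).trace).re) :
    ∀ φ : Matrix (Fin a) (Fin a) ℂ, φ.PosSemidef → φ.trace = 1 →
      ((η - traceDist φ (Matrix.vecMulVec ψ (star ψ))) / d ≤
        ((Γ * (φ ⊗ₖ (((d : ℂ))⁻¹ • (1 : Matrix (Fin d) (Fin d) ℂ)))).trace).re) ∧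
      (((Γ * (φ ⊗ₖ (((d : ℂ))⁻¹ • (1 : Matrix (Fin d) (Fin d) ℂ)))).trace).re ≤ η / (2 * d) →
        η / 2 ≤ traceDist φ (Matrix.vecMulVec ψ (star ψ))) := by
  intro φ hφ hφtr
  have hψtr : (vecMulVec ψ (star ψ)).trace = 1 := by rw [trace_vecMulVec, dotProduct_comm, hψ]
  have hbound := sub_traceDist_le_re_trace_mul_kronecker_one hΓ.nonneg hΓI hφ.nonneg
    (posSemidef_vecMulVec_self_star ψ).1 (hφtr.trans hψtr.symm) hσ.nonneg hσtr
  have hscale : ((Γ * (φ ⊗ₖ ((d : ℂ)⁻¹ • (1 : Matrix (Fin d) (Fin d) ℂ)))).trace).re =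
      ((Γ * (φ ⊗ₖ 1)).trace).re / d := by
    rw [kronecker_smul, mul_smul_comm, trace_smul, smul_eq_mul, ← Complex.ofReal_natCast,
      ← Complex.ofReal_inv, Complex.re_ofReal_mul, inv_mul_eq_div]
  have hd' : (0 : ℝ) < d := Nat.cast_pos.mpr hd
  rw [hscale]
  refine ⟨div_le_div_of_nonneg_right (by linarith) hd'.le, fun h => ?_⟩
  rw [← div_div, div_le_div_iff_of_pos_right hd'] at h
  linarith

/-- Let `0 ≤ Γ ≤ I` on `ℂ^a ⊗ ℂ^d`, `ψ ∈ ℂ^a` a unit vector, and suppose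
some density matrix `σ` satisfies `tr(Γ(ψψᴴ ⊗ σ)) ≥ η > 0`. Then every density matrix `φ`
satisfies `tr(Γ(φ ⊗ I/d)) ≥ (η − ‖φ − ψψᴴ‖_tr)/d`; in particular if
`tr(Γ(φ ⊗ I/d)) ≤ η/(2d)` then `‖φ − ψψᴴ‖_tr ≥ η/2`. -/
theorem stmt_13 {a d : ℕ} (hd : 0 < d)
    (Γ : Matrix (Fin a × Fin d) (Fin a × Fin d) ℂ)
    (hΓ : Γ.PosSemidef) (hΓI : ((1 : Matrix (Fin a × Fin d) (Fin a × Fin d) ℂ) - Γ).PosSemidef)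
    (ψ : Fin a → ℂ) (hψ : star ψ ⬝ᵥ ψ = 1)
    (η : ℝ) (hη : 0 < η)
    (σ : Matrix (Fin d) (Fin d) ℂ) (hσ : σ.PosSemidef) (hσtr : σ.trace = 1)
    (hacc : η ≤ ((Γ * (Matrix.vecMulVec ψ (star ψ) ⊗ₖ σ)).trace).re) :
    ∀ φ : Matrix (Fin a) (Fin a) ℂ, φ.PosSemidef → φ.trace = 1 →
      ((η - traceDist φ (Matrix.vecMulVec ψ (star ψ))) / d ≤
        ((Γ * (φ ⊗ₖ (((d : ℂ))⁻¹ • (1 : Matrix (Fin d) (Fin d) ℂ)))).trace).re) ∧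
      (((Γ * (φ ⊗ₖ (((d : ℂ))⁻¹ • (1 : Matrix (Fin d) (Fin d) ℂ)))).trace).re ≤ η / (2 * d) →
        η / 2 ≤ traceDist φ (Matrix.vecMulVec ψ (star ψ))) :=
  stmt_13_general hd Γ hΓ hΓI ψ hψ η σ hσ hσtr hacc
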